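/- Let A be a finite-dimensional left-symmetric algebra and (S,T,V) a bimodule of A. Define S*,T* : A → gl(V*) by ⟨S*(x)u*, v⟩ = -⟨u*, S(x)v⟩ and ⟨T*(x)u*, v⟩ = -⟨u*, T(x)v⟩. Then (S* - T*, -T*, V*) is a bimodule of A. -/

import Mathlib

/-!
Write `ρ x = T x - S x`. The bimodule axioms make `ρ` an anti-representation of the
sub-adjacent Lie algebra, `ρ y ρ x - ρ (x y) = ρ x ρ y - ρ (y x)`, and give the commutator
`T y ρ x - ρ x T y = T (x y) - T x T y`. Transposition reverses the order of composition,
so dualising turns these two identities on `V` into exactly the two bimodule axioms for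
`(S* - T*, -T*)` on `V*`.
-/

open LinearMap

section Bimodule

variable {F A V : Type*} [CommRing F] [AddCommGroup A] [Module F A]
  [AddCommGroup V] [Module F V]

theorem bimodule_sub_comp_sub_swap (mul : A →ₗ[F] A →ₗ[F] A) (S T : A →ₗ[F] V →ₗ[F] V)
    (hb1 : ∀ (x y : A) (v : V),
      S x (S y v) - S (mul x y) v = S y (S x v) - S (mul y x) v)
    (hb2 : ∀ (x y : A) (v : V),
      S x (T y v) - T y (S x v) = T (mul x y) v - T y (T x v)) (x y : A) :
    (T y - S y) ∘ₗ (T x - S x) - (T (mul x y) - S (mul x y))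
      = (T x - S x) ∘ₗ (T y - S y) - (T (mul y x) - S (mul y x)) := by
  ext v
  simp only [LinearMap.sub_apply, LinearMap.comp_apply, map_sub]
  linear_combination (norm := abel) hb2 x y v - hb2 y x v - hb1 x y v

theorem bimodule_comp_sub_commutator (mul : A →ₗ[F] A →ₗ[F] A) (S T : A →ₗ[F] V →ₗ[F] V)
    (hb2 : ∀ (x y : A) (v : V),
      S x (T y v) - T y (S x v) = T (mul x y) v - T y (T x v)) (x y : A) :
    T y ∘ₗ (T x - S x) - (T x - S x) ∘ₗ T y = T (mul x y) - T x ∘ₗ T y := by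
  ext v
  simp only [LinearMap.sub_apply, LinearMap.comp_apply, map_sub]
  linear_combination (norm := abel) hb2 x y v

end Bimodule

theorem dual_bimodule (F : Type*) [Field F]
    (A : Type*) [AddCommGroup A] [Module F A]
    (V : Type*) [AddCommGroup V] [Module F V]
    (mul : A →ₗ[F] A →ₗ[F] A)
    (S T : A →ₗ[F] V →ₗ[F] V)
    (hb1 : ∀ (x y : A) (v : V),
      S x (S y v) - S (mul x y) v = S y (S x v) - S (mul y x) v)
    (hb2 : ∀ (x y : A) (v : V),
      S x (T y v) - T y (S x v) = T (mul x y) v - T y (T x v)) :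
    (∀ (x y : A) (u : Module.Dual F V),
      (T x - S x).dualMap ((T y - S y).dualMap u)
        - (T (mul x y) - S (mul x y)).dualMap u
      = (T y - S y).dualMap ((T x - S x).dualMap u)
        - (T (mul y x) - S (mul y x)).dualMap u)
    ∧ (∀ (x y : A) (u : Module.Dual F V),
      (T x - S x).dualMap ((T y).dualMap u) - (T y).dualMap ((T x - S x).dualMap u)
      = (T (mul x y)).dualMap u - (T y).dualMap ((T x).dualMap u)) := by
  refine ⟨fun x y u => ?_, fun x y u => ?_⟩
  all_goals simp only [dualMap_apply', comp_assoc, ← comp_sub]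
  · rw [bimodule_sub_comp_sub_swap mul S T hb1 hb2]
  · rw [bimodule_comp_sub_commutator mul S T hb2]
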